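/- Let ψ : ℝ → ℝ be twice continuously differentiable with ψ''(s) + ψ'(s) = sinh(2ψ(s)) for all s ∈ ℝ, and suppose ψ(s) → 0 and ψ'(s) → 0 as s → +∞. Then for every s ∈ ℝ the function ρ ↦ ψ'(ρ)² is integrable on [s,∞) and ∫_{s}^{∞} ψ'(ρ)² dρ = (1/2)·ψ'(s)² − sinh²(ψ(s)). -/

import Mathlib

/-!
Along a solution of `ψ'' + ψ' = sinh (2ψ)` the energy `E = ψ'²/2 - sinh² ψ` satisfies
`E' = ψ' (ψ'' - sinh (2ψ)) = -ψ'²`, and `E → 0` at `+∞` because `ψ, ψ' → 0`. Since the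
dissipation `ψ'²` is nonnegative, the fundamental theorem of calculus on `[s, ∞)` gives both
its integrability and `∫_s^∞ ψ'² = E(s)`.
-/

open Set MeasureTheory Filter Topology

theorem integrableOn_Ici_and_integral_eq_of_hasDerivAt_neg {f g : ℝ → ℝ} {a l : ℝ}
    (hderiv : ∀ x ∈ Ici a, HasDerivAt g (-f x) x) (hf : ∀ x ∈ Ioi a, 0 ≤ f x)
    (hg : Tendsto g atTop (𝓝 l)) :
    IntegrableOn f (Ici a) ∧ ∫ x in Ici a, f x = g a - l := by
  have hf' : ∀ x ∈ Ioi a, -f x ≤ 0 := fun x hx => neg_nonpos.mpr (hf x hx)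
  have hint := integrableOn_Ioi_deriv_of_nonpos' hderiv hf' hg
  have hval := integral_Ioi_of_hasDerivAt_of_nonpos' hderiv hf' hg
  refine ⟨Iff.mpr integrableOn_Ici_iff_integrableOn_Ioi (by simpa using hint.neg), ?_⟩
  rw [integral_neg] at hval
  rw [integral_Ici_eq_integral_Ioi]
  linarith

noncomputable def sinhEnergy (ψ : ℝ → ℝ) (x : ℝ) : ℝ :=
  (1 / 2) * (deriv ψ x) ^ 2 - (Real.sinh (ψ x)) ^ 2

theorem hasDerivAt_sinhEnergy {ψ : ℝ → ℝ} {x : ℝ} (hψ : DifferentiableAt ℝ ψ x)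
    (hψ' : DifferentiableAt ℝ (deriv ψ) x)
    (heq : deriv (deriv ψ) x + deriv ψ x = Real.sinh (2 * ψ x)) :
    HasDerivAt (sinhEnergy ψ) (-(deriv ψ x) ^ 2) x := by
  have hsinh : HasDerivAt (fun y => Real.sinh (ψ y)) (Real.cosh (ψ x) * deriv ψ x) x :=
    (Real.hasDerivAt_sinh (ψ x)).comp x hψ.hasDerivAt
  have h := (hψ'.hasDerivAt.fun_pow 2).const_mul (1 / 2) |>.sub (hsinh.fun_pow 2)
  refine h.congr_deriv ?_
  rw [Real.sinh_two_mul] at heq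
  linear_combination deriv ψ x * heq

theorem tendsto_sinhEnergy_atTop {ψ : ℝ → ℝ} (hlim : Tendsto ψ atTop (𝓝 0))
    (hlim' : Tendsto (deriv ψ) atTop (𝓝 0)) : Tendsto (sinhEnergy ψ) atTop (𝓝 0) := by
  unfold sinhEnergy
  have h := ((hlim'.pow 2).const_mul (1 / 2)).sub
    (((Real.continuous_sinh.tendsto 0).comp hlim).pow 2)
  simpa using h

/-- Energy identity for the equation ψ'' + ψ' = sinh(2ψ). -/
theorem sinh_energy_identity (ψ : ℝ → ℝ) (hψ : ContDiff ℝ 2 ψ)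
    (heq : ∀ s : ℝ, deriv (deriv ψ) s + deriv ψ s = Real.sinh (2 * ψ s))
    (hlim : Tendsto ψ atTop (nhds 0))
    (hlim' : Tendsto (deriv ψ) atTop (nhds 0)) :
    ∀ s : ℝ,
      IntegrableOn (fun ρ => (deriv ψ ρ) ^ 2) (Ici s) ∧
      ∫ ρ in Ici s, (deriv ψ ρ) ^ 2 =
        (1 / 2) * (deriv ψ s) ^ 2 - (Real.sinh (ψ s)) ^ 2 := by
  intro s
  have hdψ : Differentiable ℝ ψ := hψ.differentiable (by norm_num)
  have hdψ' : Differentiable ℝ (deriv ψ) :=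
    (contDiff_succ_iff_deriv (n := 1).mp hψ).2.2.differentiable (by norm_num)
  have h := integrableOn_Ici_and_integral_eq_of_hasDerivAt_neg
    (f := fun ρ => (deriv ψ ρ) ^ 2) (a := s)
    (fun x _ => hasDerivAt_sinhEnergy (hdψ x) (hdψ' x) (heq x))
    (fun x _ => sq_nonneg _) (tendsto_sinhEnergy_atTop hlim hlim')
  simpa [sinhEnergy] using h
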